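/- arXiv:1202.6347 — 11 statements merged into one kernel-verified Lean document; each statement's English description precedes it below -/
import Mathlib

section
/- Let p ≥ 2 and n ≥ 1, let X be a real n×p matrix whose columns X_1,…,X_p satisfy ‖X_j‖₂² = n, and let z_1,…,z_n be independent real random variables with P(z_i > 0) = P(z_i < 0) = 1/2 (continuous with median 0). Let S = Xᵀ(sign(z_1),…,sign(z_n))ᵀ. Fix α ∈ (0,1), a constant c > 0, and A > 0 with 2·p^{-(A-1)} ≤ α. Then the penalty level λ = c·√(2·A·n·log p) satisfies P(λ ≥ c·‖S‖_∞) ≥ 1 − α. -/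
/-!
Each coordinate `S_j = ∑ᵢ X_ij sign(zᵢ)` is a sum of independent mean-zero variables with
values in `[-|X_ij|, |X_ij|]`, so by Hoeffding's lemma it is sub-Gaussian with variance proxy
`∑ᵢ X_ij² = n`, whence `P(|S_j| ≥ s) ≤ 2 exp(-s² / 2n)`. For `s = √(2 A n log p)` this is
`2 p^{-A}`, and a union bound over the `p` columns gives `P(‖S‖_∞ > s) ≤ 2 p^{1-A} ≤ α`.
-/

open MeasureTheory ProbabilityTheory

lemma Real.measurable_sign : Measurable Real.sign :=
  Measurable.ite measurableSet_Iio measurable_const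
    (Measurable.ite measurableSet_Ioi measurable_const measurable_const)

section

variable {Ω : Type*} [MeasurableSpace Ω] {μ : Measure Ω}

lemma integral_sign_comp [IsFiniteMeasure μ] {W : Ω → ℝ} (hW : Measurable W) :
    ∫ ω, Real.sign (W ω) ∂μ = μ.real {ω | 0 < W ω} - μ.real {ω | W ω < 0} := by
  have hpos : MeasurableSet {ω | 0 < W ω} := measurableSet_lt measurable_const hW
  have hneg : MeasurableSet {ω | W ω < 0} := measurableSet_lt hW measurable_const
  have hsign : (fun ω ↦ Real.sign (W ω)) =
      {ω | 0 < W ω}.indicator 1 - {ω | W ω < 0}.indicator 1 := by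
    ext ω
    rcases lt_trichotomy (W ω) 0 with h | h | h
    · simp [Real.sign_of_neg h, h, h.not_gt]
    · simp [h]
    · simp [Real.sign_of_pos h, h, h.not_gt]
  rw [hsign,
    integral_sub' ((integrable_const 1).indicator hpos) ((integrable_const 1).indicator hneg),
    integral_indicator_one hpos, integral_indicator_one hneg]

lemma hasSubgaussianMGF_mul_sign [IsProbabilityMeasure μ] {W : Ω → ℝ} (hW : Measurable W)
    (hsymm : μ {ω | 0 < W ω} = μ {ω | W ω < 0}) (w : ℝ) :
    HasSubgaussianMGF (fun ω ↦ w * Real.sign (W ω)) (‖w‖₊ ^ 2) μ := by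
  have hbound : ∀ ω, w * Real.sign (W ω) ∈ Set.Icc (-|w|) |w| := by
    intro ω
    rw [Set.mem_Icc, ← abs_le, abs_mul]
    rcases Real.sign_apply_eq (W ω) with h | h | h <;> simp [h]
  have hmean : ∫ ω, w * Real.sign (W ω) ∂μ = 0 := by
    rw [integral_const_mul, integral_sign_comp hW, measureReal_def, measureReal_def, hsymm,
      sub_self, mul_zero]
  have hparam : (‖|w| - -|w|‖₊ / 2) ^ 2 = ‖w‖₊ ^ 2 := by
    rw [sub_neg_eq_add, ← two_mul, nnnorm_mul, Real.nnnorm_abs]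
    norm_num
  simpa only [hparam] using hasSubgaussianMGF_of_mem_Icc_of_integral_eq_zero
    (X := fun ω ↦ w * Real.sign (W ω))
    ((Real.measurable_sign.comp hW).const_mul w).aemeasurable (ae_of_all _ hbound) hmean

section RademacherSum

variable [IsProbabilityMeasure μ] {ι : Type*} [Fintype ι] {z : ι → Ω → ℝ}

lemma measureReal_sum_mul_sign_ge_le (hmeas : ∀ i, Measurable (z i)) (hindep : iIndepFun z μ)
    (hsymm : ∀ i, μ {ω | 0 < z i ω} = μ {ω | z i ω < 0}) (w : ι → ℝ) {ε : ℝ} (hε : 0 ≤ ε) :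
    μ.real {ω | ε ≤ ∑ i, w i * Real.sign (z i ω)} ≤
      Real.exp (-ε ^ 2 / (2 * ∑ i, w i ^ 2)) := by
  have hindep' : iIndepFun (fun i ω ↦ w i * Real.sign (z i ω)) μ :=
    hindep.comp (fun i x ↦ w i * Real.sign x) fun i ↦ Real.measurable_sign.const_mul (w i)
  have h := HasSubgaussianMGF.measure_sum_ge_le_of_iIndepFun hindep' (s := Finset.univ)
    (fun i _ ↦ hasSubgaussianMGF_mul_sign (hmeas i) (hsymm i) (w i)) hε
  simpa using h

lemma measureReal_abs_sum_mul_sign_ge_le (hmeas : ∀ i, Measurable (z i))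
    (hindep : iIndepFun z μ) (hsymm : ∀ i, μ {ω | 0 < z i ω} = μ {ω | z i ω < 0}) (w : ι → ℝ)
    {ε : ℝ} (hε : 0 ≤ ε) :
    μ.real {ω | ε ≤ |∑ i, w i * Real.sign (z i ω)|} ≤
      2 * Real.exp (-ε ^ 2 / (2 * ∑ i, w i ^ 2)) := by
  have hsplit : {ω | ε ≤ |∑ i, w i * Real.sign (z i ω)|} =
      {ω | ε ≤ ∑ i, w i * Real.sign (z i ω)} ∪ {ω | ε ≤ ∑ i, -w i * Real.sign (z i ω)} := by
    ext ω
    simp only [Set.mem_ofPred_eq, Set.mem_union, le_abs, neg_mul, Finset.sum_neg_distrib]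
  calc μ.real {ω | ε ≤ |∑ i, w i * Real.sign (z i ω)|}
      ≤ μ.real {ω | ε ≤ ∑ i, w i * Real.sign (z i ω)} +
        μ.real {ω | ε ≤ ∑ i, -w i * Real.sign (z i ω)} := hsplit ▸ measureReal_union_le _ _
    _ ≤ 2 * Real.exp (-ε ^ 2 / (2 * ∑ i, w i ^ 2)) := by
      have h := measureReal_sum_mul_sign_ge_le hmeas hindep hsymm (fun i ↦ -w i) hε
      simp only [neg_sq] at h
      linarith [measureReal_sum_mul_sign_ge_le hmeas hindep hsymm w hε]

lemma measureReal_iSup_abs_sum_mul_sign_gt_le (hmeas : ∀ i, Measurable (z i))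
    (hindep : iIndepFun z μ) (hsymm : ∀ i, μ {ω | 0 < z i ω} = μ {ω | z i ω < 0})
    {κ : Type*} [Fintype κ] (X : Matrix ι κ ℝ) {σ2 : ℝ} (hcol : ∀ j, ∑ i, X i j ^ 2 = σ2)
    {ε : ℝ} (hε : 0 ≤ ε) :
    μ.real {ω | ε < ⨆ j, |∑ i, X i j * Real.sign (z i ω)|} ≤
      Fintype.card κ * (2 * Real.exp (-ε ^ 2 / (2 * σ2))) := by
  have hsub : {ω | ε < ⨆ j, |∑ i, X i j * Real.sign (z i ω)|} ⊆
      ⋃ j, {ω | ε ≤ |∑ i, X i j * Real.sign (z i ω)|} := by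
    intro ω hω
    by_contra hnot
    simp only [Set.mem_iUnion, Set.mem_ofPred_eq, not_exists, not_le] at hnot
    exact hω.not_ge (Real.iSup_le (fun j ↦ (hnot j).le) hε)
  calc μ.real {ω | ε < ⨆ j, |∑ i, X i j * Real.sign (z i ω)|}
      ≤ ∑ j, μ.real {ω | ε ≤ |∑ i, X i j * Real.sign (z i ω)|} :=
        (measureReal_mono hsub).trans (measureReal_iUnion_fintype_le _)
    _ ≤ ∑ _j : κ, 2 * Real.exp (-ε ^ 2 / (2 * σ2)) := Finset.sum_le_sum fun j _ ↦
        hcol j ▸ measureReal_abs_sum_mul_sign_ge_le hmeas hindep hsymm (fun i ↦ X i j) hε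
    _ = Fintype.card κ * (2 * Real.exp (-ε ^ 2 / (2 * σ2))) := by
      rw [Finset.sum_const, Finset.card_univ, nsmul_eq_mul]

end RademacherSum

lemma ofReal_one_sub_le_measure [IsProbabilityMeasure μ] {s : Set Ω} {α : ℝ} (hα : 0 ≤ α)
    (hs : μ.real sᶜ ≤ α) : ENNReal.ofReal (1 - α) ≤ μ s := by
  rw [ENNReal.ofReal_sub _ hα, ENNReal.ofReal_one, tsub_le_iff_right]
  calc 1 = μ Set.univ := measure_univ.symm
    _ ≤ μ s + μ sᶜ := measure_univ_le_add_compl s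
    _ ≤ μ s + ENNReal.ofReal α := by
      gcongr
      rw [← ofReal_measureReal (s := sᶜ)]
      exact ENNReal.ofReal_le_ofReal hs

end

-- An equality for `0 < x`; at `x = 0` the left side is `0` while `0 ^ 0 = 1`.
lemma Real.mul_exp_neg_mul_log_le_rpow {x : ℝ} (hx : 0 ≤ x) (a : ℝ) :
    x * Real.exp (-(a * Real.log x)) ≤ x ^ (1 - a) := by
  rcases hx.eq_or_lt with rfl | hx
  · simpa using Real.rpow_nonneg le_rfl (1 - a)
  · rw [Real.rpow_sub hx, Real.rpow_one, Real.rpow_def_of_pos hx, Real.exp_neg, mul_comm a,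
      div_eq_mul_inv]

theorem penalty_choice_general
    {Ω : Type*} [MeasurableSpace Ω] (μ : Measure Ω) [IsProbabilityMeasure μ]
    (n p : ℕ) (hn : 1 ≤ n)
    (X : Matrix (Fin n) (Fin p) ℝ)
    (hcol : ∀ j : Fin p, ∑ i, (X i j) ^ 2 = (n : ℝ))
    (z : Fin n → Ω → ℝ)
    (hmeas : ∀ i, Measurable (z i))
    (hindep : iIndepFun z μ)
    (hpos : ∀ i, μ {ω | 0 < z i ω} = 1 / 2)
    (hneg : ∀ i, μ {ω | z i ω < 0} = 1 / 2)
    (α : ℝ)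
    (c A : ℝ) (hc : 0 < c) (hA : 0 < A)
    (hAα : 2 * (p : ℝ) ^ (-(A - 1) : ℝ) ≤ α)
    (lam : ℝ) (hlam : lam = c * Real.sqrt (2 * A * n * Real.log p)) :
    ENNReal.ofReal (1 - α) ≤
      μ {ω | c * (⨆ j : Fin p, |∑ i, X i j * Real.sign (z i ω)|) ≤ lam} := by
  set s := Real.sqrt (2 * A * n * Real.log p)
  have hs : s ^ 2 = 2 * A * n * Real.log p := Real.sq_sqrt (by positivity)
  have hn0 : (n : ℝ) ≠ 0 := by positivity
  have htail : μ.real {ω | s < ⨆ j, |∑ i, X i j * Real.sign (z i ω)|} ≤ α :=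
    calc _ ≤ p * (2 * Real.exp (-s ^ 2 / (2 * n))) := by
          simpa using measureReal_iSup_abs_sum_mul_sign_gt_le hmeas hindep
            (fun i ↦ (hpos i).trans (hneg i).symm) X hcol (Real.sqrt_nonneg _)
      _ = 2 * (p * Real.exp (-(A * Real.log p))) := by
          rw [hs]
          field_simp
      _ ≤ 2 * (p : ℝ) ^ (1 - A) := by
          gcongr
          exact Real.mul_exp_neg_mul_log_le_rpow p.cast_nonneg A
      _ ≤ α := by rwa [← neg_sub]
  have hgood : {ω | (⨆ j, |∑ i, X i j * Real.sign (z i ω)|) ≤ s} ⊆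
      {ω | c * (⨆ j, |∑ i, X i j * Real.sign (z i ω)|) ≤ lam} := fun ω hω ↦
    hlam ▸ mul_le_mul_of_nonneg_left hω hc.le
  refine (ofReal_one_sub_le_measure (le_trans (by positivity) hAα) ?_).trans (measure_mono hgood)
  simpa only [Set.compl_ofPred, not_le] using htail

/-- **Choice of penalty for the L1 penalized LAD estimator (Lemma 1).**
If the columns of `X` satisfy `‖X_j‖₂² = n`, the noise variables `z_i` are independent
with `P(z_i > 0) = P(z_i < 0) = 1/2`, and `S = Xᵀ sign(z)`, then for any `α ∈ (0,1)`,
`c > 0` and `A > 0` with `2 p^{-(A-1)} ≤ α`, the penalty `λ = c √(2 A n log p)`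
satisfies `P(λ ≥ c ‖S‖_∞) ≥ 1 - α`. -/
theorem penalty_choice
    {Ω : Type*} [MeasurableSpace Ω] (μ : Measure Ω) [IsProbabilityMeasure μ]
    (n p : ℕ) (hn : 1 ≤ n) (hp : 2 ≤ p)
    (X : Matrix (Fin n) (Fin p) ℝ)
    (hcol : ∀ j : Fin p, ∑ i, (X i j) ^ 2 = (n : ℝ))
    (z : Fin n → Ω → ℝ)
    (hmeas : ∀ i, Measurable (z i))
    (hindep : iIndepFun z μ)
    (hpos : ∀ i, μ {ω | 0 < z i ω} = 1 / 2)
    (hneg : ∀ i, μ {ω | z i ω < 0} = 1 / 2)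
    (α : ℝ) (hα : α ∈ Set.Ioo (0 : ℝ) 1)
    (c A : ℝ) (hc : 0 < c) (hA : 0 < A)
    (hAα : 2 * (p : ℝ) ^ (-(A - 1) : ℝ) ≤ α)
    (lam : ℝ) (hlam : lam = c * Real.sqrt (2 * A * n * Real.log p)) :
    ENNReal.ofReal (1 - α) ≤
      μ {ω | c * (⨆ j : Fin p, |∑ i, X i j * Real.sign (z i ω)|) ≤ lam} :=
  penalty_choice_general μ n p hn X hcol z hmeas hindep hpos hneg α c A hc hA hAα lam hlam
end

section
/- Let z be a real random variable whose distribution is atomless (a continuous random variable). Then the function F(x) = E(|z + x| − |z|) is differentiable at every x ∈ ℝ with derivative F′(x) = 1 − 2·P(z ≤ −x). -/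
/-!
Each integrand `t ↦ |z + t| - |z|` is 1-Lipschitz, so the integral may be differentiated under
the integral sign with the constant dominating function `1`. Since `z ≠ -x` almost surely, the
integrand is almost surely differentiable at `x`, with derivative `-1` on `{z ≤ -x}` and `1` off
it; integrating gives `1 - 2 P(z ≤ -x)`.
-/

open MeasureTheory

lemma lipschitzWith_abs_add_sub_abs (a : ℝ) : LipschitzWith 1 (fun t : ℝ => |a + t| - |a|) :=
  LipschitzWith.of_dist_le_mul fun s t => by
    simpa [Real.dist_eq] using abs_abs_sub_abs_le_abs_sub (a + s) (a + t)

lemma hasDerivAt_abs_add_sub_abs {a x : ℝ} (h : a ≠ -x) :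
    HasDerivAt (fun t : ℝ => |a + t| - |a|) (if a ≤ -x then -1 else 1) x := by
  have hax : a + x ≠ 0 := fun h' => h (by linarith)
  have hderiv := ((hasDerivAt_abs hax).comp x ((hasDerivAt_id x).const_add a)).sub_const |a|
  refine hderiv.congr_deriv ?_
  rcases hax.lt_or_gt with hneg | hpos
  · simp [show a ≤ -x by linarith, hneg]
  · simp [show ¬a ≤ -x by linarith, hpos]

lemma integral_ite_neg_one_one {Ω : Type*} [MeasurableSpace Ω] (μ : Measure Ω)
    [IsFiniteMeasure μ] {p : Ω → Prop} [DecidablePred p] (hp : MeasurableSet {ω | p ω}) :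
    ∫ ω, (if p ω then (-1 : ℝ) else 1) ∂μ = μ.real Set.univ - 2 * μ.real {ω | p ω} := by
  have hpointwise : (fun ω => if p ω then (-1 : ℝ) else 1) =
      fun ω => 1 - 2 * {ω | p ω}.indicator (1 : Ω → ℝ) ω := by
    funext ω
    by_cases hω : p ω <;> norm_num [hω]
  rw [hpointwise,
    integral_sub (integrable_const 1) (((integrable_const 1).indicator hp).const_mul 2),
    integral_const_mul, integral_indicator_one hp, integral_const, smul_eq_mul, mul_one]

theorem hasDerivAt_integral_abs_add_sub_abs {Ω : Type*} [MeasurableSpace Ω] (μ : Measure Ω)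
    [IsFiniteMeasure μ] {z : Ω → ℝ} (hz : Measurable z) {x : ℝ} (hx : μ {ω | z ω = -x} = 0) :
    HasDerivAt (fun t : ℝ => ∫ ω, (|z ω + t| - |z ω|) ∂μ)
      (∫ ω, (if z ω ≤ -x then (-1 : ℝ) else 1) ∂μ) x := by
  have hmeas (t : ℝ) : AEStronglyMeasurable (fun ω => |z ω + t| - |z ω|) μ :=
    ((hz.add_const t).abs.sub hz.abs).aestronglyMeasurable
  have hint : Integrable (fun ω => |z ω + x| - |z ω|) μ :=
    (integrable_const |x|).mono' (hmeas x) (ae_of_all _ fun ω => by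
      simpa using abs_abs_sub_abs_le_abs_sub (z ω + x) (z ω))
  have hlip : ∀ᵐ ω ∂μ, LipschitzOnWith (Real.nnabs 1) (fun t => |z ω + t| - |z ω|) Set.univ :=
    ae_of_all _ fun ω => by
      simpa using (lipschitzWith_abs_add_sub_abs (z ω)).lipschitzOnWith (s := Set.univ)
  have hne : ∀ᵐ ω ∂μ, z ω ≠ -x := measure_eq_zero_iff_ae_notMem.mp hx
  exact (hasDerivAt_integral_of_dominated_loc_of_lip Filter.univ_mem
    (Filter.Eventually.of_forall hmeas) hint
    ((measurable_const.ite (measurableSet_le hz measurable_const) measurable_const).aestronglyMeasurable)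
    hlip (integrable_const 1)
    (hne.mono fun ω => hasDerivAt_abs_add_sub_abs)).2

/-- **Derivative of the expected absolute deviation (Lemma 4).**
For a continuous (atomless) real random variable `z`, the function
`F(x) = E(|z + x| - |z|)` is differentiable with `F'(x) = 1 - 2 P(z ≤ -x)`. -/
theorem deriv_expected_abs_dev
    {Ω : Type*} [MeasurableSpace Ω] (μ : Measure Ω) [IsProbabilityMeasure μ]
    (z : Ω → ℝ) (hz : Measurable z)
    (hatom : ∀ x : ℝ, μ {ω | z ω = x} = 0)
    (x : ℝ) :
    HasDerivAt (fun t : ℝ => ∫ ω, (|z ω + t| - |z ω|) ∂μ)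
      (1 - 2 * (μ {ω | z ω ≤ -x}).toReal) x := by
  have hderiv := hasDerivAt_integral_abs_add_sub_abs μ hz (hatom (-x))
  rwa [integral_ite_neg_one_one μ (p := fun ω => z ω ≤ -x) (measurableSet_le hz measurable_const),
    probReal_univ] at hderiv
end

section
/- Let z be a real random variable whose distribution is atomless. Then for every c > 0, E(|z + c| − |z|) = c − 2·∫₀^c P(z ≤ −x) dx. -/
open MeasureTheory

/-! Pointwise, `|a + c| - |a| = c - 2 min(c, (-a)⁺)`, and by the layer-cake formula the
expectation of the bounded variable `min(c, (-z)⁺)` is `∫₀^c P(-z ≥ t) dt`. -/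

theorem abs_add_sub_abs_eq_sub_two_mul_min_max {α : Type*} [Field α] [LinearOrder α]
    [IsStrictOrderedRing α] {c : α} (hc : 0 ≤ c) (a : α) :
    |a + c| - |a| = c - 2 * min c (max 0 (-a)) := by
  rcases le_total a 0 with ha | ha
  · rcases le_total (a + c) 0 with hac | hac
    · rw [abs_of_nonpos hac, abs_of_nonpos ha, max_eq_right (by linarith),
        min_eq_left (by linarith)]
      ring
    · rw [abs_of_nonneg hac, abs_of_nonpos ha, max_eq_right (by linarith),
        min_eq_right (by linarith)]
      ring
  · rw [abs_of_nonneg ha, abs_of_nonneg (by linarith), max_eq_left (by linarith),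
      min_eq_right hc]
    ring

theorem integrable_min_max_zero {α : Type*} [MeasurableSpace α] {μ : Measure α}
    [IsFiniteMeasure μ] {f : α → ℝ} (hf : AEMeasurable f μ) {c : ℝ} (hc : 0 ≤ c) :
    Integrable (fun ω => min c (max 0 (f ω))) μ := by
  refine .of_bound (by fun_prop) c (.of_forall fun ω => ?_)
  rw [Real.norm_of_nonneg (le_min hc (le_max_left _ _))]
  exact min_le_left _ _

theorem integral_min_max_zero_eq_intervalIntegral {α : Type*} [MeasurableSpace α]
    {μ : Measure α} [IsFiniteMeasure μ] {f : α → ℝ} (hf : AEMeasurable f μ) {c : ℝ}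
    (hc : 0 ≤ c) :
    ∫ ω, min c (max 0 (f ω)) ∂μ = ∫ t in (0 : ℝ)..c, μ.real {ω | t ≤ f ω} := by
  rw [(integrable_min_max_zero hf hc).integral_eq_integral_Ioc_meas_le
      (.of_forall fun ω => le_min hc (le_max_left _ _)) (.of_forall fun ω => min_le_left _ _),
    intervalIntegral.integral_of_le hc]
  refine setIntegral_congr_fun measurableSet_Ioc fun t ⟨ht₀, htc⟩ => ?_
  simp only [le_min_iff, htc, le_max_iff, ht₀.not_ge, true_and, false_or]

theorem expected_abs_dev_eq_general
    {Ω : Type*} [MeasurableSpace Ω] (μ : Measure Ω) [IsProbabilityMeasure μ]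
    (z : Ω → ℝ) (hz : Measurable z)
    (c : ℝ) (hc : 0 < c) :
    ∫ ω, (|z ω + c| - |z ω|) ∂μ =
      c - 2 * ∫ x in (0 : ℝ)..c, (μ {ω | z ω ≤ -x}).toReal := by
  have hnegz : AEMeasurable (fun ω => -z ω) μ := hz.neg.aemeasurable
  simp_rw [abs_add_sub_abs_eq_sub_two_mul_min_max hc.le]
  rw [integral_sub (integrable_const c) ((integrable_min_max_zero hnegz hc.le).const_mul 2),
    integral_const, integral_const_mul, integral_min_max_zero_eq_intervalIntegral hnegz hc.le]
  rw [probReal_univ, one_smul]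
  simp only [le_neg, Measure.real_def]

/-- **Integral formula for the expected absolute deviation.**
For a continuous (atomless) real random variable `z` and `c > 0`,
`E(|z + c| - |z|) = c - 2 ∫₀^c P(z ≤ -x) dx`. -/
theorem expected_abs_dev_eq
    {Ω : Type*} [MeasurableSpace Ω] (μ : Measure Ω) [IsProbabilityMeasure μ]
    (z : Ω → ℝ) (hz : Measurable z)
    (hatom : ∀ x : ℝ, μ {ω | z ω = x} = 0)
    (c : ℝ) (hc : 0 < c) :
    ∫ ω, (|z ω + c| - |z ω|) ∂μ =
      c - 2 * ∫ x in (0 : ℝ)..c, (μ {ω | z ω ≤ -x}).toReal :=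
  expected_abs_dev_eq_general μ z hz c hc
end

section
/- Let a > 0 and let z be a real random variable whose distribution is atomless and satisfies the scale condition: P(z ≥ x) ≤ 1/(2 + a·x) for all x ≥ 0 and P(z ≤ x) ≤ 1/(2 + a·|x|) for all x < 0. Then for every real number c, E(|z + c| − |z|) ≥ (a/16)·|c|·min(|c|, 6/a). -/
/-!
For `c > 0` the identity `|x + c| - |x| = c - 2 min(c, max(-x, 0))` and the layer-cake formula give
`E(|z + c| - |z|) = c - 2 ∫₀ᶜ P(z ≤ -t) dt`. On `(0, c]` the lower tail bound `1 / (2 + a t)` lies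
below the line `1/2 - k t` with `k = a min(c, 6/a) / (16 c)`, and integrating that line yields
`E(|z + c| - |z|) ≥ k c²`, which is the claim. The case `c < 0` follows by applying this to `-z`.
-/

open MeasureTheory Set

lemma abs_add_sub_abs_eq_sub_two_mul_min {c : ℝ} (hc : 0 ≤ c) (x : ℝ) :
    |x + c| - |x| = c - 2 * min c (max (-x) 0) := by
  grind [abs_of_nonneg, abs_of_nonpos]

lemma one_div_two_add_mul_le_half_sub {a c t : ℝ} (ha : 0 < a) (ht : 0 < t) (htc : t ≤ c) :
    1 / (2 + a * t) ≤ 1 / 2 - a * min c (6 / a) / (16 * c) * t := by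
  set m := min c (6 / a)
  have hc : 0 < c := ht.trans_le htc
  have hmc : m ≤ c := min_le_left _ _
  have ham : a * m ≤ 6 := by
    have := mul_le_mul_of_nonneg_left (min_le_right c (6 / a)) ha.le
    rwa [mul_div_cancel₀ _ ha.ne'] at this
  -- `m (2 + a t) ≤ 2c + 6t ≤ 8c` is the whole content once denominators are cleared.
  have hkey : m * (2 + a * t) ≤ 8 * c := by nlinarith
  have hline : a * m / (16 * c) * t * (2 + a * t) ≤ a * t / 2 := by
    rw [div_mul_eq_mul_div, div_mul_eq_mul_div, div_le_div_iff₀ (by positivity) two_pos]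
    nlinarith [mul_le_mul_of_nonneg_left hkey (mul_pos ha ht).le]
  rw [div_le_iff₀ (by positivity)]
  linear_combination hline

section

variable {Ω : Type*} [MeasurableSpace Ω] {μ : Measure Ω} {z : Ω → ℝ}

theorem integral_abs_add_sub_abs_eq [IsProbabilityMeasure μ] (hz : Measurable z) {c : ℝ}
    (hc : 0 ≤ c) :
    ∫ ω, (|z ω + c| - |z ω|) ∂μ = c - 2 * ∫ t in Ioc 0 c, μ.real {ω | z ω ≤ -t} := by
  set g : Ω → ℝ := fun ω => min c (max (-z ω) 0)
  have hg_nonneg : ∀ ω, 0 ≤ g ω := fun ω => le_min hc (le_max_right _ _)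
  have hg_le : ∀ ω, g ω ≤ c := fun ω => min_le_left _ _
  have hg_int : Integrable g μ := by
    refine (integrable_const c).mono' (by fun_prop) (ae_of_all _ fun ω => ?_)
    rw [Real.norm_eq_abs, abs_of_nonneg (hg_nonneg ω)]
    exact hg_le ω
  have hlevel : ∀ t ∈ Ioc (0 : ℝ) c, μ.real {ω | t ≤ g ω} = μ.real {ω | z ω ≤ -t} := by
    rintro t ⟨ht0, htc⟩
    congr 1
    ext ω
    simp only [g, mem_ofPred_eq, le_min_iff, le_max_iff, htc, true_and, ht0.not_ge, or_false]
    exact le_neg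
  simp_rw [abs_add_sub_abs_eq_sub_two_mul_min hc]
  rw [integral_sub (integrable_const c) (hg_int.const_mul 2), integral_const, integral_const_mul,
    hg_int.integral_eq_integral_Ioc_meas_le (ae_of_all _ hg_nonneg) (ae_of_all _ hg_le),
    setIntegral_congr_fun measurableSet_Ioc hlevel]
  simp

theorem integral_abs_add_sub_abs_ge_of_lower_tail [IsProbabilityMeasure μ] {a : ℝ} (ha : 0 < a)
    (hz : Measurable z) (htail : ∀ t : ℝ, 0 < t → μ.real {ω | z ω ≤ -t} ≤ 1 / (2 + a * t))
    {c : ℝ} (hc : 0 < c) :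
    a / 16 * c * min c (6 / a) ≤ ∫ ω, (|z ω + c| - |z ω|) ∂μ := by
  set k := a * min c (6 / a) / (16 * c)
  have hF_int : IntegrableOn (fun t => μ.real {ω | z ω ≤ -t}) (Ioc 0 c) := by
    refine (AntitoneOn.integrableOn_isCompact isCompact_Icc fun s _ t _ hst => ?_).mono_set
      Ioc_subset_Icc_self
    exact measureReal_mono fun ω (hω : z ω ≤ -t) => hω.trans (neg_le_neg hst)
  have hline_int : IntegrableOn (fun t : ℝ => 1 / 2 - k * t) (Ioc 0 c) :=
    (by fun_prop : Continuous fun t : ℝ => 1 / 2 - k * t).integrableOn_Ioc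
  have hle : ∫ t in Ioc 0 c, μ.real {ω | z ω ≤ -t} ≤ ∫ t in Ioc 0 c, (1 / 2 - k * t) :=
    setIntegral_mono_on hF_int hline_int measurableSet_Ioc fun t ⟨ht0, htc⟩ =>
      (htail t ht0).trans (one_div_two_add_mul_le_half_sub ha ht0 htc)
  have hline : ∫ t in Ioc 0 c, (1 / 2 - k * t) = c / 2 - k * c ^ 2 / 2 := by
    rw [← intervalIntegral.integral_of_le hc.le, intervalIntegral.integral_sub
      intervalIntegrable_const ((continuous_const_mul k).intervalIntegrable 0 c),
      intervalIntegral.integral_const_mul, integral_id, intervalIntegral.integral_const]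
    simp only [smul_eq_mul]
    ring
  have hkc : k * c ^ 2 = a / 16 * c * min c (6 / a) := by
    simp only [k]
    field_simp
  rw [integral_abs_add_sub_abs_eq hz hc.le]
  linarith

end

theorem expected_abs_dev_scale_bound_general
    {Ω : Type*} [MeasurableSpace Ω] (μ : Measure Ω) [IsProbabilityMeasure μ]
    (a : ℝ) (ha : 0 < a)
    (z : Ω → ℝ) (hz : Measurable z)
    (htail₁ : ∀ x : ℝ, 0 ≤ x → (μ {ω | x ≤ z ω}).toReal ≤ 1 / (2 + a * x))
    (htail₂ : ∀ x : ℝ, x < 0 → (μ {ω | z ω ≤ x}).toReal ≤ 1 / (2 + a * |x|))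
    (c : ℝ) :
    (a / 16) * |c| * min |c| (6 / a) ≤ ∫ ω, (|z ω + c| - |z ω|) ∂μ := by
  rcases lt_trichotomy c 0 with hc | rfl | hc
  · have htail : ∀ t : ℝ, 0 < t → μ.real {ω | -z ω ≤ -t} ≤ 1 / (2 + a * t) := by
      simpa only [measureReal_def, neg_le_neg_iff] using fun t ht => htail₁ t ht.le
    have h := integral_abs_add_sub_abs_ge_of_lower_tail ha hz.neg htail (neg_pos.mpr hc)
    simpa only [Pi.neg_apply, ← neg_add, abs_neg, abs_of_neg hc] using h
  · simp
  · have htail : ∀ t : ℝ, 0 < t → μ.real {ω | z ω ≤ -t} ≤ 1 / (2 + a * t) := fun t ht => by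
      simpa only [measureReal_def, abs_neg, abs_of_pos ht] using htail₂ (-t) (neg_neg_of_pos ht)
    simpa only [abs_of_pos hc] using integral_abs_add_sub_abs_ge_of_lower_tail ha hz htail hc

/-- **Lemma 5: quadratic-linear lower bound for the expected absolute deviation.**
If `z` is atomless and satisfies the scale condition `P(z ≥ x) ≤ 1/(2 + a x)` for
`x ≥ 0` and `P(z ≤ x) ≤ 1/(2 + a |x|)` for `x < 0`, then for every real `c`,
`E(|z + c| - |z|) ≥ (a/16) |c| min(|c|, 6/a)`. -/
theorem expected_abs_dev_scale_bound
    {Ω : Type*} [MeasurableSpace Ω] (μ : Measure Ω) [IsProbabilityMeasure μ]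
    (a : ℝ) (ha : 0 < a)
    (z : Ω → ℝ) (hz : Measurable z)
    (hatom : ∀ x : ℝ, μ {ω | z ω = x} = 0)
    (htail₁ : ∀ x : ℝ, 0 ≤ x → (μ {ω | x ≤ z ω}).toReal ≤ 1 / (2 + a * x))
    (htail₂ : ∀ x : ℝ, x < 0 → (μ {ω | z ω ≤ x}).toReal ≤ 1 / (2 + a * |x|))
    (c : ℝ) :
    (a / 16) * |c| * min |c| (6 / a) ≤ ∫ ω, (|z ω + c| - |z ω|) ∂μ :=
  expected_abs_dev_scale_bound_general μ a ha z hz htail₁ htail₂ c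
end

section
/- Let U > 0, let n ≥ 1, and let x = (x_1,…,x_n) ∈ ℝⁿ. Define G(x) = Σ_{i=1}^n |x_i|·min(|x_i|, U). If ‖x‖₁ ≥ n·U/2, then G(x) ≥ U·‖x‖₁/2. -/
/-! The line `t ↦ U t - U²/4` is tangent to `t ↦ t²` at `U / 2` and lies below `t ↦ t U`,
so it minorizes `t ↦ t min(t, U)`. Summing over the coordinates gives
`G(x) ≥ U ‖x‖₁ - n U² / 4`, and the hypothesis `n U / 2 ≤ ‖x‖₁` bounds `n U² / 4` by `U ‖x‖₁ / 2`. -/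

lemma mul_sub_sq_div_four_le_mul_min (U t : ℝ) : U * t - U ^ 2 / 4 ≤ t * min t U := by
  rcases le_total t U with h | h
  · rw [min_eq_left h]
    nlinarith [sq_nonneg (t - U / 2)]
  · rw [min_eq_right h]
    nlinarith [sq_nonneg U]

lemma mul_sum_sub_card_mul_le_sum_mul_min {ι : Type*} (s : Finset ι) (U : ℝ) (f : ι → ℝ) :
    U * ∑ i ∈ s, f i - s.card * (U ^ 2 / 4) ≤ ∑ i ∈ s, f i * min (f i) U := by
  rw [Finset.mul_sum, ← nsmul_eq_mul, ← Finset.sum_const, ← Finset.sum_sub_distrib]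
  exact Finset.sum_le_sum fun i _ => mul_sub_sq_div_four_le_mul_min U (f i)

theorem G_lower_bound_large_general
    (U : ℝ) (hU : 0 < U) (n : ℕ) (x : Fin n → ℝ)
    (hx : (n : ℝ) * U / 2 ≤ ∑ i, |x i|) :
    U * (∑ i, |x i|) / 2 ≤ ∑ i, |x i| * min |x i| U := by
  have hG := mul_sum_sub_card_mul_le_sum_mul_min Finset.univ U (fun i => |x i|)
  rw [Finset.card_univ, Fintype.card_fin] at hG
  have hquad : n * (U ^ 2 / 4) ≤ U * (∑ i, |x i|) / 2 := by
    nlinarith [mul_le_mul_of_nonneg_left hx hU.le]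
  linarith

/-- **Lemma 6, first case.** For `U > 0` and `x ∈ ℝⁿ` with
`G(x) = Σᵢ |xᵢ| min(|xᵢ|, U)`, if `‖x‖₁ ≥ n U / 2` then `G(x) ≥ U ‖x‖₁ / 2`. -/
theorem G_lower_bound_large
    (U : ℝ) (hU : 0 < U) (n : ℕ) (hn : 1 ≤ n) (x : Fin n → ℝ)
    (hx : (n : ℝ) * U / 2 ≤ ∑ i, |x i|) :
    U * (∑ i, |x i|) / 2 ≤ ∑ i, |x i| * min |x i| U :=
  G_lower_bound_large_general U hU n x hx
end

section
/- For every n ≥ 1 and every x = (x_1,…,x_n) ∈ ℝⁿ, ‖x‖₂ − ‖x‖₁/√n ≤ (√n/4)·( max_{1≤i≤n} |x_i| − min_{1≤i≤n} |x_i| ). -/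
/-!
Write `aᵢ = |xᵢ| ∈ [m, M]`. Since `(aᵢ - m)(M - aᵢ) ≥ 0`, summing gives
`‖x‖₂² ≤ (m + M)‖x‖₁ - n m M`, and this upper bound is at most
`(‖x‖₁/√n + √n (M - m)/4)²`: their difference is the sum of squares
`(‖x‖₁/√n - √n (M + 3m)/4)² + n m (M - m)/2`.
-/

open Finset

theorem sq_le_add_mul_sub_mul_of_mem_Icc {R : Type*} [CommRing R] [LinearOrder R]
    [IsStrictOrderedRing R] {a m M : R} (ha : a ∈ Set.Icc m M) :
    a ^ 2 ≤ (m + M) * a - m * M := by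
  nlinarith [mul_nonneg (sub_nonneg.2 ha.1) (sub_nonneg.2 ha.2)]

theorem sum_sq_le_add_mul_sum_sub_card_mul_of_mem_Icc {ι R : Type*} [CommRing R] [LinearOrder R]
    [IsStrictOrderedRing R] (s : Finset ι) (a : ι → R) {m M : R}
    (ha : ∀ i ∈ s, a i ∈ Set.Icc m M) :
    ∑ i ∈ s, a i ^ 2 ≤ (m + M) * ∑ i ∈ s, a i - #s * (m * M) :=
  calc ∑ i ∈ s, a i ^ 2 ≤ ∑ i ∈ s, ((m + M) * a i - m * M) :=
        sum_le_sum fun i hi => sq_le_add_mul_sub_mul_of_mem_Icc (ha i hi)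
    _ = (m + M) * ∑ i ∈ s, a i - #s * (m * M) := by
        rw [sum_sub_distrib, ← mul_sum, sum_const, nsmul_eq_mul]

theorem sqrt_sub_div_sqrt_le_of_le_add_mul_sub_mul {T S m M n : ℝ} (hn : 0 < n) (hm : 0 ≤ m)
    (hmM : m ≤ M) (hS : 0 ≤ S) (hT : T ≤ (m + M) * S - n * (m * M)) :
    √T - S / √n ≤ √n / 4 * (M - m) := by
  obtain ⟨s, hs, rfl⟩ : ∃ s, 0 < s ∧ n = s ^ 2 :=
    ⟨√n, Real.sqrt_pos.2 hn, (Real.sq_sqrt hn.le).symm⟩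
  rw [Real.sqrt_sq hs.le]
  have hsos : (S / s + s / 4 * (M - m)) ^ 2 =
      (m + M) * S - s ^ 2 * (m * M) + (S / s - s * (M + 3 * m) / 4) ^ 2
        + s ^ 2 * m * (M - m) / 2 := by
    field_simp
    ring
  rw [sub_le_iff_le_add', Real.sqrt_le_left (by positivity), hsos]
  linarith [sq_nonneg (S / s - s * (M + 3 * m) / 4),
    mul_nonneg (mul_nonneg hn.le hm) (sub_nonneg.2 hmM)]

theorem l2_l1_spread_bound_general (n : ℕ) (x : Fin n → ℝ) :
    Real.sqrt (∑ i, (x i) ^ 2) - (∑ i, |x i|) / Real.sqrt n ≤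
      Real.sqrt n / 4 * ((⨆ i, |x i|) - ⨅ i, |x i|) := by
  rcases n.eq_zero_or_pos with rfl | hn
  · simp
  have : Nonempty (Fin n) := ⟨⟨0, hn⟩⟩
  have hbelow : BddBelow (Set.range fun i => |x i|) := (Set.finite_range _).bddBelow
  have habove : BddAbove (Set.range fun i => |x i|) := (Set.finite_range _).bddAbove
  have hsum := sum_sq_le_add_mul_sum_sub_card_mul_of_mem_Icc univ (fun i => |x i|)
    fun i _ => ⟨ciInf_le hbelow i, le_ciSup habove i⟩
  simp only [sq_abs, card_univ, Fintype.card_fin] at hsum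
  exact sqrt_sub_div_sqrt_le_of_le_add_mul_sub_mul (by exact_mod_cast hn)
    (le_ciInf fun i => abs_nonneg _) (ciInf_le_ciSup hbelow habove)
    (sum_nonneg fun i _ => abs_nonneg _) hsum

/-- **Lemma 7 (shifting inequality).** For every `x ∈ ℝⁿ`,
`‖x‖₂ - ‖x‖₁/√n ≤ (√n/4) (maxᵢ |xᵢ| - minᵢ |xᵢ|)`. -/
theorem l2_l1_spread_bound (n : ℕ) (hn : 1 ≤ n) (x : Fin n → ℝ) :
    Real.sqrt (∑ i, (x i) ^ 2) - (∑ i, |x i|) / Real.sqrt n ≤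
      Real.sqrt n / 4 * ((⨆ i, |x i|) - ⨅ i, |x i|) :=
  l2_l1_spread_bound_general n x
end

section
/- Let X be a real n×p matrix, let β ∈ ℝ^p with support T = {j : β_j ≠ 0}, let z ∈ ℝⁿ with z_i ≠ 0 for all i, and set Y = Xβ + z. Let c > 1 and let λ > 0 satisfy λ ≥ c·‖Xᵀ sign(z)‖_∞, where sign(z) = (sign(z_1),…,sign(z_n))ᵀ. Then every minimizer β̂ of γ ↦ ‖Y − Xγ‖₁ + λ‖γ‖₁ satisfies ‖h_T‖₁ ≥ ((c−1)/(c+1))·‖h_{T^c}‖₁, where h = β̂ − β and for a set E ⊆ {1,…,p}, h_E denotes the vector agreeing with h on E and equal to 0 off E. -/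
/-!
Comparing the objective at `β̂` with its value at `β` gives the basic inequality
`λ (‖β̂‖₁ - ‖β‖₁) ≤ ‖z‖₁ - ‖z - Xh‖₁ ≤ ⟨h, Xᵀ sign z⟩` for `h = β̂ - β`, the second step
because `sign z` is a subgradient of `‖·‖₁` at `z`. The right side is at most `(λ / c) ‖h‖₁`
by Hölder, while the triangle inequality on and off `T = supp β` bounds the left side below
by `λ (‖h_{Tᶜ}‖₁ - ‖h_T‖₁)`. Hence `c (‖h_{Tᶜ}‖₁ - ‖h_T‖₁) ≤ ‖h_{Tᶜ}‖₁ + ‖h_T‖₁`.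
-/

open Finset Matrix

namespace Real

theorem sign_mul_self_eq_abs (r : ℝ) : sign r * r = |r| := by
  rcases lt_trichotomy r 0 with hr | rfl | hr
  · rw [sign_of_neg hr, abs_of_neg hr]; ring
  · simp
  · rw [sign_of_pos hr, abs_of_pos hr]; ring

theorem abs_sign_le_one (r : ℝ) : |sign r| ≤ 1 := by
  rcases sign_apply_eq r with h | h | h <;> simp [h]

theorem abs_sub_sign_mul_le_abs_sub (r s : ℝ) : |r| - sign r * s ≤ |r - s| :=
  calc |r| - sign r * s = sign r * (r - s) := by rw [mul_sub, sign_mul_self_eq_abs]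
    _ ≤ |sign r| * |r - s| := abs_mul (sign r) (r - s) ▸ le_abs_self _
    _ ≤ |r - s| := mul_le_of_le_one_left (abs_nonneg _) (abs_sign_le_one r)

end Real

variable {ι κ : Type*} [Fintype ι] [Fintype κ]

theorem sum_abs_sub_sum_sign_mul_le (z w : ι → ℝ) :
    ∑ i, |z i| - ∑ i, Real.sign (z i) * w i ≤ ∑ i, |z i - w i| := by
  rw [← sum_sub_distrib]
  exact sum_le_sum fun i _ => Real.abs_sub_sign_mul_le_abs_sub (z i) (w i)

theorem sum_mul_mulVec_eq_sum_mul_sum (X : Matrix ι κ ℝ) (s : ι → ℝ) (h : κ → ℝ) :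
    ∑ i, s i * (X *ᵥ h) i = ∑ j, h j * ∑ i, X i j * s i := by
  simp only [mulVec, dotProduct, mul_sum]
  rw [sum_comm]
  exact sum_congr rfl fun j _ => sum_congr rfl fun i _ => by ring

theorem mul_sum_mul_le_of_mul_abs_le {c lam : ℝ} (hc : 0 ≤ c) (h S : κ → ℝ)
    (hS : ∀ j, c * |S j| ≤ lam) : c * ∑ j, h j * S j ≤ lam * ∑ j, |h j| := by
  rw [mul_sum, mul_sum]
  refine sum_le_sum fun j _ => ?_
  calc c * (h j * S j) ≤ |c * (h j * S j)| := le_abs_self _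
    _ = |h j| * (c * |S j|) := by rw [abs_mul, abs_mul, abs_of_nonneg hc]; ring
    _ ≤ |h j| * lam := mul_le_mul_of_nonneg_left (hS j) (abs_nonneg _)
    _ = lam * |h j| := mul_comm _ _

section Support

variable (β b : κ → ℝ)

theorem sum_ite_eq_zero_add_sum_ite_ne_zero :
    ∑ j, (if β j = 0 then |b j - β j| else 0) + ∑ j, (if β j ≠ 0 then |b j - β j| else 0) =
      ∑ j, |b j - β j| := by
  rw [← sum_add_distrib]
  exact sum_congr rfl fun j _ => by by_cases hj : β j = 0 <;> simp [hj]

theorem sum_ite_eq_zero_sub_sum_ite_ne_zero_le :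
    ∑ j, (if β j = 0 then |b j - β j| else 0) - ∑ j, (if β j ≠ 0 then |b j - β j| else 0) ≤
      ∑ j, |b j| - ∑ j, |β j| := by
  rw [← sum_sub_distrib, ← sum_sub_distrib]
  refine sum_le_sum fun j _ => ?_
  by_cases hj : β j = 0
  · simp [hj]
  · simp only [hj, if_false, ne_eq, not_false_eq_true, if_true, zero_sub]
    linarith [abs_sub_abs_le_abs_sub (β j) (b j), abs_sub_comm (β j) (b j)]

end Support

theorem cone_property_general
    (n p : ℕ) (X : Matrix (Fin n) (Fin p) ℝ)
    (β : Fin p → ℝ) (z : Fin n → ℝ)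
    (c : ℝ) (hc : 1 < c) (lam : ℝ) (hlam0 : 0 < lam)
    (hlam : ∀ j : Fin p, c * |∑ i, X i j * Real.sign (z i)| ≤ lam)
    (bhat : Fin p → ℝ)
    (hmin : ∀ γ : Fin p → ℝ,
        (∑ i, |(X.mulVec β i + z i) - X.mulVec bhat i|) + lam * ∑ j, |bhat j| ≤
        (∑ i, |(X.mulVec β i + z i) - X.mulVec γ i|) + lam * ∑ j, |γ j|) :
    (c - 1) / (c + 1) * ∑ j, (if β j = 0 then |bhat j - β j| else 0) ≤
      ∑ j, (if β j ≠ 0 then |bhat j - β j| else 0) := by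
  have hc0 : 0 ≤ c := by linarith
  set A := ∑ j, (if β j = 0 then |bhat j - β j| else 0)
  set B := ∑ j, (if β j ≠ 0 then |bhat j - β j| else 0)
  have hresidual : ∀ i, (X *ᵥ β) i + z i - (X *ᵥ bhat) i = z i - (X *ᵥ (bhat - β)) i :=
    fun i => by rw [mulVec_sub, Pi.sub_apply]; ring
  have basic : lam * (∑ j, |bhat j| - ∑ j, |β j|) ≤
      ∑ i, Real.sign (z i) * (X *ᵥ (bhat - β)) i := by
    have := hmin β
    simp only [hresidual, add_sub_cancel_left] at this
    linarith [sum_abs_sub_sum_sign_mul_le z (X *ᵥ (bhat - β))]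
  have holder : c * ∑ i, Real.sign (z i) * (X *ᵥ (bhat - β)) i ≤ lam * (A + B) := by
    rw [sum_mul_mulVec_eq_sum_mul_sum, sum_ite_eq_zero_add_sum_ite_ne_zero]
    exact mul_sum_mul_le_of_mul_abs_le hc0 _ _ hlam
  have key : lam * (c * (A - B)) ≤ lam * (A + B) :=
    calc lam * (c * (A - B)) = c * (lam * (A - B)) := by ring
      _ ≤ c * (lam * (∑ j, |bhat j| - ∑ j, |β j|)) := mul_le_mul_of_nonneg_left
          (mul_le_mul_of_nonneg_left (sum_ite_eq_zero_sub_sum_ite_ne_zero_le β bhat) hlam0.le) hc0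
      _ ≤ c * ∑ i, Real.sign (z i) * (X *ᵥ (bhat - β)) i := mul_le_mul_of_nonneg_left basic hc0
      _ ≤ lam * (A + B) := holder
  rw [div_mul_eq_mul_div, div_le_iff₀ (by linarith)]
  linarith [le_of_mul_le_mul_left key hlam0]

/-- **Cone (restricted set) property of the L1 penalized LAD estimator.**
If `Y = Xβ + z`, `z_i ≠ 0` for all `i`, `c > 1` and `λ ≥ c ‖Xᵀ sign(z)‖_∞`, then any
minimizer `β̂` of `γ ↦ ‖Y - Xγ‖₁ + λ ‖γ‖₁` satisfies
`‖h_T‖₁ ≥ ((c-1)/(c+1)) ‖h_{T^c}‖₁` for `h = β̂ - β` and `T = supp(β)`. -/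
theorem cone_property
    (n p : ℕ) (X : Matrix (Fin n) (Fin p) ℝ)
    (β : Fin p → ℝ) (z : Fin n → ℝ) (hz : ∀ i, z i ≠ 0)
    (c : ℝ) (hc : 1 < c) (lam : ℝ) (hlam0 : 0 < lam)
    (hlam : ∀ j : Fin p, c * |∑ i, X i j * Real.sign (z i)| ≤ lam)
    (bhat : Fin p → ℝ)
    (hmin : ∀ γ : Fin p → ℝ,
        (∑ i, |(X.mulVec β i + z i) - X.mulVec bhat i|) + lam * ∑ j, |bhat j| ≤
        (∑ i, |(X.mulVec β i + z i) - X.mulVec γ i|) + lam * ∑ j, |γ j|) :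
    (c - 1) / (c + 1) * ∑ j, (if β j = 0 then |bhat j - β j| else 0) ≤
      ∑ j, (if β j ≠ 0 then |bhat j - β j| else 0) :=
  cone_property_general n p X β z c hc lam hlam0 hlam bhat hmin
end

section
/- Let X be a real n×p matrix with columns X_1,…,X_p, let Y ∈ ℝⁿ, and let λ > 0. If ‖X_i‖₁ < λ for some index i ∈ {1,…,p}, then every minimizer β̂ of γ ↦ ‖Y − Xγ‖₁ + λ‖γ‖₁ satisfies β̂_i = 0. -/
/-- **Large penalty kills low-`ℓ₁` columns.**
If `‖X_i‖₁ < λ` for some column `i`, then any minimizer `β̂` of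
`γ ↦ ‖Y - Xγ‖₁ + λ ‖γ‖₁` satisfies `β̂_i = 0`. -/
theorem small_column_implies_zero
    (n p : ℕ) (X : Matrix (Fin n) (Fin p) ℝ) (Y : Fin n → ℝ)
    (lam : ℝ) (hlam0 : 0 < lam)
    (i : Fin p) (hcol : ∑ r, |X r i| < lam)
    (bhat : Fin p → ℝ)
    (hmin : ∀ γ : Fin p → ℝ,
        (∑ r, |Y r - X.mulVec bhat r|) + lam * ∑ j, |bhat j| ≤
        (∑ r, |Y r - X.mulVec γ r|) + lam * ∑ j, |γ j|) :
    bhat i = 0 := by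
  set γ := Function.update bhat i 0 with hγ
  have h1 : ∑ j, |γ j| = (∑ j, |bhat j|) - |bhat i| := by
    rw [← Finset.sum_erase_add _ _ (Finset.mem_univ i),
        ← Finset.sum_erase_add Finset.univ (fun j => |bhat j|) (Finset.mem_univ i)]
    have : ∑ j ∈ Finset.univ.erase i, |γ j| = ∑ j ∈ Finset.univ.erase i, |bhat j| := by
      apply Finset.sum_congr rfl
      intro j hj
      rw [hγ, Function.update_of_ne (Finset.ne_of_mem_erase hj)]
    rw [this]
    simp [hγ]
  have h2 : ∀ r, X.mulVec γ r = X.mulVec bhat r - X r i * bhat i := by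
    intro r
    simp only [Matrix.mulVec, dotProduct]
    rw [← Finset.sum_erase_add _ _ (Finset.mem_univ i),
        ← Finset.sum_erase_add Finset.univ (fun j => X r j * bhat j) (Finset.mem_univ i)]
    have : ∑ j ∈ Finset.univ.erase i, X r j * γ j
        = ∑ j ∈ Finset.univ.erase i, X r j * bhat j := by
      apply Finset.sum_congr rfl
      intro j hj
      rw [hγ, Function.update_of_ne (Finset.ne_of_mem_erase hj)]
    rw [this]
    simp [hγ]
  have h3 : (∑ r, |Y r - X.mulVec γ r|)
      ≤ (∑ r, |Y r - X.mulVec bhat r|) + (∑ r, |X r i|) * |bhat i| := by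
    rw [Finset.sum_mul, ← Finset.sum_add_distrib]
    apply Finset.sum_le_sum
    intro r _
    rw [h2 r]
    have : Y r - (X.mulVec bhat r - X r i * bhat i)
        = (Y r - X.mulVec bhat r) + X r i * bhat i := by ring
    rw [this, ← abs_mul]
    exact abs_add_le _ _
  have hm := hmin γ
  rw [h1] at hm
  have habs : 0 ≤ |bhat i| := abs_nonneg _
  have : |bhat i| = 0 := by nlinarith
  exact abs_eq_zero.mp this
end

section
/- Let 1 ≤ k, let p ≥ k, let C̄ > 0, and let h ∈ ℝ^p satisfy |h_1| ≥ |h_2| ≥ … ≥ |h_p| and ‖h_{S_0}‖₁ ≥ C̄·‖h_{S_0^c}‖₁, where S_0 = {1,…,k}. Partition {1,…,p} into consecutive blocks S_0 = {1,…,k}, S_1 = {k+1,…,2k}, S_2 = {2k+1,…,3k}, … (the last block possibly shorter). Then Σ_{i ≥ 1} ‖h_{S_i}‖₂ ≤ (1/4 + 1/C̄)·‖h_{S_0}‖₂. -/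
/-- **Block decomposition bound (inequality (14)).**
If the coordinates of `h ∈ ℝ^p` are sorted by decreasing magnitude and
`‖h_{S₀}‖₁ ≥ C̄ ‖h_{S₀ᶜ}‖₁` with `S₀ = {1,…,k}`, then, partitioning the indices into
consecutive blocks `S₀, S₁, S₂, …` of length `k`,
`Σ_{i ≥ 1} ‖h_{S_i}‖₂ ≤ (1/4 + 1/C̄) ‖h_{S₀}‖₂`. -/
theorem block_decomposition_bound
    (p k : ℕ) (hk : 1 ≤ k) (hkp : k ≤ p)
    (Cbar : ℝ) (hCbar : 0 < Cbar)
    (h : Fin p → ℝ)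
    (hsorted : ∀ i j : Fin p, i ≤ j → |h j| ≤ |h i|)
    (hcone : Cbar * (∑ j : Fin p, if k ≤ (j : ℕ) then |h j| else 0) ≤
        ∑ j : Fin p, if (j : ℕ) < k then |h j| else 0) :
    (∑ i ∈ Finset.Icc 1 p, Real.sqrt (∑ j : Fin p,
        if k * i ≤ (j : ℕ) ∧ (j : ℕ) < k * (i + 1) then (h j) ^ 2 else 0)) ≤
      (1 / 4 + 1 / Cbar) *
        Real.sqrt (∑ j : Fin p, if (j : ℕ) < k then (h j) ^ 2 else 0) := by
  classical
  -- the extended, nonnegative, nonincreasing magnitude sequence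
  set g : ℕ → ℝ := fun n => if hn : n < p then |h ⟨n, hn⟩| else 0 with hgdef
  have hg0 : ∀ n, 0 ≤ g n := by
    intro n; simp only [hgdef]; split
    · exact abs_nonneg _
    · exact le_refl 0
  have hgp : ∀ n, p ≤ n → g n = 0 := by
    intro n hn; simp only [hgdef]; rw [dif_neg (by omega)]
  have hmono : ∀ m n : ℕ, m ≤ n → g n ≤ g m := by
    intro m n hmn
    by_cases hn : n < p
    · have hm : m < p := lt_of_le_of_lt hmn hn
      simp only [hgdef]; rw [dif_pos hn, dif_pos hm]
      exact hsorted ⟨m, hm⟩ ⟨n, hn⟩ hmn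
    · rw [hgp n (by omega)]; exact hg0 m
  -- conversion of `Fin p` sums to `Ico` sums over ℕ
  have hconv : ∀ (f : ℕ → ℝ), (∀ n, p ≤ n → f n = 0) → ∀ a b : ℕ,
      (∑ j : Fin p, if a ≤ (j : ℕ) ∧ (j : ℕ) < b then f (j : ℕ) else 0)
        = ∑ n ∈ Finset.Ico a b, f n := by
    intro f hf a b
    rw [Fin.sum_univ_eq_sum_range (fun n => if a ≤ n ∧ n < b then f n else 0) p]
    set M := max p b with hM
    have h1 : ∑ n ∈ Finset.range p, (if a ≤ n ∧ n < b then f n else 0)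
        = ∑ n ∈ Finset.range M, (if a ≤ n ∧ n < b then f n else 0) := by
      apply Finset.sum_subset
      · exact Finset.range_subset_range.2 (le_max_left _ _)
      · intro x hx hxp
        simp only [Finset.mem_range, not_lt] at hxp
        split
        · exact hf x hxp
        · rfl
    rw [h1, ← Finset.sum_filter]
    apply Finset.sum_congr
    · ext n
      simp only [Finset.mem_filter, Finset.mem_range, Finset.mem_Ico]
      constructor
      · rintro ⟨_, h2, h3⟩; exact ⟨h2, h3⟩
      · rintro ⟨h2, h3⟩; exact ⟨lt_of_lt_of_le h3 (le_max_right _ _), h2, h3⟩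
    · intros; rfl
  set s : ℝ := Real.sqrt k with hsdef
  have hkpos : (0:ℝ) < (k:ℝ) := by exact_mod_cast hk
  have hs0 : 0 < s := Real.sqrt_pos.2 hkpos
  have hs2 : s ^ 2 = (k:ℝ) := Real.sq_sqrt hkpos.le
  -- the shifting inequality for a block
  have hblock : ∀ i : ℕ,
      Real.sqrt (∑ n ∈ Finset.Ico (k*i) (k*(i+1)), g n ^ 2)
        ≤ (∑ n ∈ Finset.Ico (k*i) (k*(i+1)), g n) / s
          + s / 4 * (g (k*i) - g (k*(i+1))) := by
    intro i
    set a := g (k*i) with ha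
    set b := g (k*(i+1)) with hb
    set L := ∑ n ∈ Finset.Ico (k*i) (k*(i+1)), g n with hL
    have hba : b ≤ a := hmono _ _ (Nat.mul_le_mul_left k (Nat.le_succ i))
    have hb0 : 0 ≤ b := hg0 _
    have hL0 : 0 ≤ L := Finset.sum_nonneg fun n _ => hg0 n
    have hcard : (Finset.Ico (k*i) (k*(i+1))).card = k := by
      rw [Nat.card_Ico, Nat.mul_succ]; omega
    have h1 : (∑ n ∈ Finset.Ico (k*i) (k*(i+1)), g n ^ 2) ≤ (a+b)*L - k*(a*b) := by
      have step : ∀ n ∈ Finset.Ico (k*i) (k*(i+1)), g n ^ 2 ≤ (a+b) * g n - a*b := by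
        intro n hn
        simp only [Finset.mem_Ico] at hn
        have h2 : g n ≤ a := hmono _ _ hn.1
        have h3 : b ≤ g n := hmono _ _ (by omega)
        nlinarith [mul_nonneg (sub_nonneg.2 h2) (sub_nonneg.2 h3)]
      calc (∑ n ∈ Finset.Ico (k*i) (k*(i+1)), g n ^ 2)
          ≤ ∑ n ∈ Finset.Ico (k*i) (k*(i+1)), ((a+b) * g n - a*b) :=
            Finset.sum_le_sum step
        _ = (a+b)*L - k*(a*b) := by
            rw [Finset.sum_sub_distrib, ← Finset.mul_sum, Finset.sum_const, hcard,
              nsmul_eq_mul]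
    set R : ℝ := L / s + s / 4 * (a - b) with hR
    have hR0 : 0 ≤ R := by
      apply add_nonneg (div_nonneg hL0 hs0.le)
      exact mul_nonneg (by positivity) (sub_nonneg.2 hba)
    have hRs : R * s = L + (k:ℝ) * (a - b) / 4 := by
      rw [hR, add_mul, div_mul_cancel₀ _ hs0.ne']
      rw [show s / 4 * (a-b) * s = s^2 * (a-b) / 4 by ring, hs2]
    have key : (k:ℝ) * ((a+b)*L - k*(a*b)) ≤ (L + (k:ℝ)*(a-b)/4)^2 := by
      nlinarith [sq_nonneg (L - (k:ℝ)*(a+3*b)/4),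
        mul_nonneg (mul_nonneg (sq_nonneg (k:ℝ)) hb0) (sub_nonneg.2 hba)]
    have h4 : (a+b)*L - k*(a*b) ≤ R^2 := by
      rw [← hRs] at key
      have : (R*s)^2 = R^2 * k := by rw [mul_pow, hs2]
      rw [this] at key
      nlinarith
    calc Real.sqrt (∑ n ∈ Finset.Ico (k*i) (k*(i+1)), g n ^ 2)
        ≤ Real.sqrt (R^2) := Real.sqrt_le_sqrt (h1.trans h4)
      _ = R := Real.sqrt_sq hR0
  -- rewrite the statement's sums
  have hsq0 : ∀ n, p ≤ n → g n ^ 2 = 0 := fun n hn => by rw [hgp n hn]; ring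
  have habs : ∀ j : Fin p, g (j : ℕ) = |h j| := by
    intro j; simp only [hgdef]; rw [dif_pos j.isLt]
  have hsq : ∀ j : Fin p, (h j) ^ 2 = g (j : ℕ) ^ 2 := by
    intro j; rw [habs j, sq_abs]
  have hiff : ∀ j : Fin p, (k ≤ (j:ℕ)) ↔ (k ≤ (j:ℕ) ∧ (j:ℕ) < k*(p+1)) := by
    intro j
    have := j.isLt
    constructor
    · intro hj; exact ⟨hj, by nlinarith [Nat.le_mul_of_pos_left (p+1) hk]⟩
    · exact fun hj => hj.1
  have hiff2 : ∀ j : Fin p, ((j:ℕ) < k) ↔ (0 ≤ (j:ℕ) ∧ (j:ℕ) < k) := by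
    intro j; simp
  -- the ℓ² norm of the head
  set B : ℝ := Real.sqrt (∑ n ∈ Finset.Ico 0 k, g n ^ 2) with hBdef
  have hB2 : B ^ 2 = ∑ n ∈ Finset.Ico 0 k, g n ^ 2 :=
    Real.sq_sqrt (Finset.sum_nonneg fun n _ => sq_nonneg _)
  have hB0 : 0 ≤ B := Real.sqrt_nonneg _
  -- head ℓ¹ sum and tail ℓ¹ sum
  set S1 : ℝ := ∑ n ∈ Finset.Ico 0 k, g n with hS1def
  set T : ℝ := ∑ n ∈ Finset.Ico k (k*(p+1)), g n with hTdef
  have hT0 : 0 ≤ T := Finset.sum_nonneg fun n _ => hg0 n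
  -- cone condition in terms of g
  have hcone' : Cbar * T ≤ S1 := by
    have e1 : (∑ j : Fin p, if k ≤ (j : ℕ) then |h j| else 0) = T := by
      rw [hTdef, ← hconv g hgp k (k*(p+1))]
      apply Finset.sum_congr rfl
      intro j _
      rw [habs j]
      congr 1
      · simp only [eq_iff_iff]; exact hiff j
    have e2 : (∑ j : Fin p, if (j : ℕ) < k then |h j| else 0) = S1 := by
      rw [hS1def, ← hconv g hgp 0 k]
      apply Finset.sum_congr rfl
      intro j _
      rw [habs j]
      congr 1
      · simp only [eq_iff_iff]; exact hiff2 j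
    rw [← e1, ← e2]; exact hcone
  -- Cauchy-Schwarz : S1 ≤ s * B
  have hCS : S1 ≤ s * B := by
    have h5 : S1 ^ 2 ≤ (k:ℝ) * ∑ n ∈ Finset.Ico 0 k, g n ^ 2 := by
      rw [hS1def]
      have := sq_sum_le_card_mul_sum_sq (s := Finset.Ico 0 k) (f := g)
      rwa [Nat.card_Ico, Nat.sub_zero] at this
    have h6 : S1 ^ 2 ≤ (s*B)^2 := by
      rw [mul_pow, hs2, hB2]; exact h5
    have hS10 : 0 ≤ S1 := Finset.sum_nonneg fun n _ => hg0 n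
    have := Real.sqrt_le_sqrt h6
    rwa [Real.sqrt_sq hS10, Real.sqrt_sq (by positivity)] at this
  -- g k ≤ B / s, i.e. s * g k ≤ B
  have hgk : s * g k ≤ B := by
    have h5 : (k:ℝ) * (g k)^2 ≤ ∑ n ∈ Finset.Ico 0 k, g n ^ 2 := by
      have step : ∀ n ∈ Finset.Ico 0 k, (g k)^2 ≤ g n ^2 := by
        intro n hn
        simp only [Finset.mem_Ico] at hn
        exact pow_le_pow_left₀ (hg0 k) (hmono n k hn.2.le) 2
      calc (k:ℝ) * (g k)^2 = ∑ _n ∈ Finset.Ico 0 k, (g k)^2 := by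
            rw [Finset.sum_const, Nat.card_Ico, nsmul_eq_mul]; simp
        _ ≤ ∑ n ∈ Finset.Ico 0 k, g n ^ 2 := Finset.sum_le_sum step
    have h6 : (s * g k)^2 ≤ B^2 := by
      rw [mul_pow, hs2, hB2]; exact h5
    have := Real.sqrt_le_sqrt h6
    rwa [Real.sqrt_sq (mul_nonneg hs0.le (hg0 k)), Real.sqrt_sq hB0] at this
  -- rewrite the LHS blockwise
  have hLHS : (∑ i ∈ Finset.Icc 1 p, Real.sqrt (∑ j : Fin p,
        if k * i ≤ (j : ℕ) ∧ (j : ℕ) < k * (i + 1) then (h j) ^ 2 else 0))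
      = ∑ i ∈ Finset.Icc 1 p,
          Real.sqrt (∑ n ∈ Finset.Ico (k*i) (k*(i+1)), g n ^ 2) := by
    apply Finset.sum_congr rfl
    intro i _
    congr 1
    rw [← hconv (fun n => g n ^ 2) hsq0 (k*i) (k*(i+1))]
    apply Finset.sum_congr rfl
    intro j _
    split
    · exact hsq j
    · rfl
  -- rewrite the RHS
  have hRHS : Real.sqrt (∑ j : Fin p, if (j : ℕ) < k then (h j) ^ 2 else 0) = B := by
    rw [hBdef]
    congr 1
    rw [← hconv (fun n => g n ^ 2) hsq0 0 k]
    apply Finset.sum_congr rfl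
    intro j _
    by_cases hc : (j:ℕ) < k
    · rw [if_pos hc, if_pos ⟨Nat.zero_le _, hc⟩]; exact hsq j
    · rw [if_neg hc, if_neg (fun hcon => hc hcon.2)]
  rw [hLHS, hRHS]
  -- the blockwise ℓ¹ sums add up to T
  have hunion : ∀ M : ℕ, (∑ i ∈ Finset.Ico 1 (M+1), ∑ n ∈ Finset.Ico (k*i) (k*(i+1)), g n)
      = ∑ n ∈ Finset.Ico k (k*(M+1)), g n := by
    intro M
    have hkm : ∀ a b : ℕ, a ≤ b → k*a ≤ k*b := fun a b hab => Nat.mul_le_mul_left k hab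
    induction M with
    | zero => simp
    | succ m ih =>
        rw [Finset.sum_Ico_succ_top (by omega), ih]
        exact Finset.sum_Ico_consecutive g
          (by simpa using hkm 1 (m+1) (by omega)) (hkm (m+1) (m+2) (by omega))
  -- the telescoping sum
  have htel : ∀ M : ℕ, (∑ i ∈ Finset.Ico 1 (M+1), (g (k*i) - g (k*(i+1)))) = g k - g (k*(M+1)) := by
    intro M
    induction M with
    | zero => simp [mul_one]
    | succ m ih =>
        rw [Finset.sum_Ico_succ_top (by omega), ih]
        ring
  have hIccIco : Finset.Icc 1 p = Finset.Ico 1 (p+1) := (Finset.Ico_add_one_right_eq_Icc 1 p).symm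
  -- putting everything together
  calc (∑ i ∈ Finset.Icc 1 p, Real.sqrt (∑ n ∈ Finset.Ico (k*i) (k*(i+1)), g n ^ 2))
      ≤ ∑ i ∈ Finset.Icc 1 p, ((∑ n ∈ Finset.Ico (k*i) (k*(i+1)), g n) / s
          + s / 4 * (g (k*i) - g (k*(i+1)))) :=
        Finset.sum_le_sum fun i _ => hblock i
    _ = T / s + s / 4 * (g k - g (k*(p+1))) := by
        rw [Finset.sum_add_distrib, ← Finset.sum_div, ← Finset.mul_sum, hIccIco,
          hunion p, htel p, hTdef]
    _ ≤ T / s + s / 4 * g k := by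
        have : g k - g (k*(p+1)) ≤ g k := by
          have := hg0 (k*(p+1)); linarith
        have h7 : 0 ≤ s / 4 := by positivity
        nlinarith
    _ ≤ B / Cbar + s / 4 * g k := by
        have hTs : T / s ≤ B / Cbar := by
          rw [div_le_div_iff₀ hs0 hCbar]
          have h9 : Cbar * T ≤ s * B := hcone'.trans hCS
          linarith
        linarith
    _ ≤ B / Cbar + B / 4 := by
        have h8 : s / 4 * g k ≤ B / 4 := by linarith [hgk]
        linarith
    _ = (1 / 4 + 1 / Cbar) * B := by
        field_simp
        ring
end

section
/- Let 1 ≤ k, let p ≥ k, let C̄ > 0, and let h ∈ ℝ^p satisfy |h_1| ≥ |h_2| ≥ … ≥ |h_p| and Σ_{i=1}^{k} |h_i| ≥ C̄·Σ_{i=k+1}^{p} |h_i|. Then Σ_{i=k+1}^{p} h_i² ≤ (1/C̄)·Σ_{i=1}^{k} h_i². -/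
/-! With `A = Σ_{i ≤ k} |h_i|`, every tail coordinate is at most the average `A / k` of the `k`
largest magnitudes, so the tail `ℓ₂` mass is at most `(A / k) · Σ_{i > k} |h_i| ≤ A² / (k C̄)`
by the cone condition, and Cauchy–Schwarz gives `A² ≤ k Σ_{i ≤ k} h_i²`. -/

open Finset

namespace Finset

variable {ι : Type*} {s t : Finset ι} {f : ι → ℝ}

lemma sum_sq_le_mul_sum_abs {M : ℝ} (hM : ∀ j ∈ t, |f j| ≤ M) :
    ∑ j ∈ t, f j ^ 2 ≤ M * ∑ j ∈ t, |f j| := by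
  rw [mul_sum]
  gcongr with j hj
  rw [← sq_abs, sq]
  exact mul_le_mul_of_nonneg_right (hM j hj) (abs_nonneg _)

lemma abs_le_sum_abs_div_card (hs : s.Nonempty) {j : ι} (hdom : ∀ i ∈ s, |f j| ≤ |f i|) :
    |f j| ≤ (∑ i ∈ s, |f i|) / #s := by
  rw [← expect_eq_sum_div_card]
  exact le_expect hs hdom

lemma sum_sq_le_one_div_mul_sum_sq_of_cone {C : ℝ} (hC : 0 < C)
    (hdom : ∀ i ∈ s, ∀ j ∈ t, |f j| ≤ |f i|)
    (hcone : C * ∑ j ∈ t, |f j| ≤ ∑ i ∈ s, |f i|) :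
    ∑ j ∈ t, f j ^ 2 ≤ 1 / C * ∑ i ∈ s, f i ^ 2 := by
  set A := ∑ i ∈ s, |f i|
  set B := ∑ j ∈ t, |f j|
  have hB : 0 ≤ B := sum_nonneg fun _ _ ↦ abs_nonneg _
  rcases s.eq_empty_or_nonempty with rfl | hs
  · have hB0 : B = 0 := by simp only [A, sum_empty] at hcone; nlinarith
    have htail : ∑ j ∈ t, f j ^ 2 ≤ B * B := sum_sq_le_mul_sum_abs fun j hj ↦
      single_le_sum (f := fun j ↦ |f j|) (fun _ _ ↦ abs_nonneg _) hj
    simpa only [hB0, mul_zero, sum_empty] using htail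
  have hcard : (0 : ℝ) < #s := by exact_mod_cast hs.card_pos
  have hA : 0 ≤ A := sum_nonneg fun _ _ ↦ abs_nonneg _
  have htail : ∑ j ∈ t, f j ^ 2 ≤ A / #s * B :=
    sum_sq_le_mul_sum_abs fun j hj ↦ abs_le_sum_abs_div_card hs fun i hi ↦ hdom i hi j hj
  have hBA : B ≤ A / C := by rw [le_div_iff₀ hC]; linarith
  have hCS : A ^ 2 ≤ #s * ∑ i ∈ s, f i ^ 2 := by
    simpa only [sq_abs] using sq_sum_le_card_mul_sum_sq (s := s) (f := fun i ↦ |f i|)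
  calc ∑ j ∈ t, f j ^ 2
      ≤ A / #s * (A / C) := htail.trans (by gcongr)
    _ = A ^ 2 / (#s * C) := by ring
    _ ≤ (#s * ∑ i ∈ s, f i ^ 2) / (#s * C) := by gcongr
    _ = 1 / C * ∑ i ∈ s, f i ^ 2 := by field_simp

end Finset

theorem tail_l2_bound_general
    (p k : ℕ)
    (Cbar : ℝ) (hCbar : 0 < Cbar)
    (h : Fin p → ℝ)
    (hsorted : ∀ i j : Fin p, i ≤ j → |h j| ≤ |h i|)
    (hcone : Cbar * (∑ j : Fin p, if k ≤ (j : ℕ) then |h j| else 0) ≤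
        ∑ j : Fin p, if (j : ℕ) < k then |h j| else 0) :
    (∑ j : Fin p, if k ≤ (j : ℕ) then (h j) ^ 2 else 0) ≤
      (1 / Cbar) * ∑ j : Fin p, if (j : ℕ) < k then (h j) ^ 2 else 0 := by
  simp only [← sum_filter] at hcone ⊢
  refine sum_sq_le_one_div_mul_sum_sq_of_cone hCbar (fun i hi j hj ↦ hsorted i j ?_) hcone
  rw [mem_filter] at hi hj
  exact Fin.le_def.2 (by omega)

/-- **Tail `ℓ₂` mass bound in the cone.**
If the coordinates of `h ∈ ℝ^p` are sorted by decreasing magnitude and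
`Σ_{i ≤ k} |h_i| ≥ C̄ Σ_{i > k} |h_i|`, then
`Σ_{i > k} h_i² ≤ (1/C̄) Σ_{i ≤ k} h_i²`. -/
theorem tail_l2_bound
    (p k : ℕ) (hk : 1 ≤ k) (hkp : k ≤ p)
    (Cbar : ℝ) (hCbar : 0 < Cbar)
    (h : Fin p → ℝ)
    (hsorted : ∀ i j : Fin p, i ≤ j → |h j| ≤ |h i|)
    (hcone : Cbar * (∑ j : Fin p, if k ≤ (j : ℕ) then |h j| else 0) ≤
        ∑ j : Fin p, if (j : ℕ) < k then |h j| else 0) :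
    (∑ j : Fin p, if k ≤ (j : ℕ) then (h j) ^ 2 else 0) ≤
      (1 / Cbar) * ∑ j : Fin p, if (j : ℕ) < k then (h j) ^ 2 else 0 :=
  tail_l2_bound_general p k Cbar hCbar h hsorted hcone
end

section
/- Consider the noiseless high-dimensional linear model Y = Xβ, where X is a real n×p matrix and β ∈ ℝ^p has support T = {j : β_j ≠ 0} with |T| ≤ k (1 ≤ k). Suppose κ > 0 is a constant such that every nonzero h ∈ ℝ^p with ‖h_T‖₁ ≥ ‖h_{T^c}‖₁ satisfies ‖Xh‖₁ ≥ n·κ·‖h_T‖₂. If the penalty level λ > 0 satisfies λ·√k < n·κ, then every minimizer β̂ of γ ↦ ‖Y − Xγ‖₁ + λ‖γ‖₁ equals β. -/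
/-- **Exact recovery in the noiseless case (Theorem 3).**
In the noiseless model `Y = Xβ` with `|supp(β)| ≤ k`, if every nonzero `h` in the
cone `‖h_T‖₁ ≥ ‖h_{T^c}‖₁` satisfies `‖Xh‖₁ ≥ n κ ‖h_T‖₂`, and the penalty satisfies
`λ √k < n κ`, then every minimizer of `γ ↦ ‖Y - Xγ‖₁ + λ ‖γ‖₁` equals `β`. -/
theorem noiseless_exact_recovery
    (n p k : ℕ) (hk : 1 ≤ k)
    (X : Matrix (Fin n) (Fin p) ℝ)
    (β : Fin p → ℝ)
    (hsupp : (Finset.univ.filter fun j => β j ≠ 0).card ≤ k)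
    (κ : ℝ) (hκ : 0 < κ)
    (hcone : ∀ h : Fin p → ℝ, h ≠ 0 →
        (∑ j, (if β j = 0 then |h j| else 0)) ≤ ∑ j, (if β j ≠ 0 then |h j| else 0) →
        (n : ℝ) * κ * Real.sqrt (∑ j, if β j ≠ 0 then (h j) ^ 2 else 0) ≤
          ∑ i, |X.mulVec h i|)
    (lam : ℝ) (hlam0 : 0 < lam) (hlamκ : lam * Real.sqrt k < (n : ℝ) * κ)
    (bhat : Fin p → ℝ)
    (hmin : ∀ γ : Fin p → ℝ,
        (∑ i, |X.mulVec β i - X.mulVec bhat i|) + lam * ∑ j, |bhat j| ≤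
        (∑ i, |X.mulVec β i - X.mulVec γ i|) + lam * ∑ j, |γ j|) :
    bhat = β := by
  by_contra hne
  set h : Fin p → ℝ := fun j => bhat j - β j with hh
  have hne' : h ≠ 0 := by
    intro h0
    apply hne
    funext j
    have := congrFun h0 j
    simp only [hh, Pi.zero_apply] at this
    linarith
  set T : Finset (Fin p) := Finset.univ.filter fun j => β j ≠ 0 with hT
  set A : ℝ := ∑ i, |X.mulVec h i| with hA
  set ST : ℝ := ∑ j, (if β j ≠ 0 then |h j| else 0) with hST
  set SC : ℝ := ∑ j, (if β j = 0 then |h j| else 0) with hSC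
  set S2 : ℝ := ∑ j, (if β j ≠ 0 then (h j) ^ 2 else 0) with hS2
  have hS2nn : 0 ≤ S2 := Finset.sum_nonneg fun j _ => by positivity
  have hSTnn : 0 ≤ ST := Finset.sum_nonneg fun j _ => by positivity
  have hSCnn : 0 ≤ SC := Finset.sum_nonneg fun j _ => by positivity
  have hAnn : 0 ≤ A := Finset.sum_nonneg fun i _ => abs_nonneg _
  have hres : ∀ i, |X.mulVec β i - X.mulVec bhat i| = |X.mulVec h i| := by
    intro i
    have : X.mulVec h i = X.mulVec bhat i - X.mulVec β i := by
      simp [hh, Matrix.mulVec, dotProduct, Finset.sum_sub_distrib, mul_sub]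
    rw [this, abs_sub_comm]
  have key := hmin β
  simp only [hres, sub_self, abs_zero, Finset.sum_const_zero, zero_add] at key
  have hstep : A ≤ lam * (ST - SC) := by
    have hsum : (∑ j, |β j|) - ∑ j, |bhat j| ≤ ST - SC := by
      rw [hST, hSC, ← Finset.sum_sub_distrib, ← Finset.sum_sub_distrib]
      apply Finset.sum_le_sum
      intro j _
      by_cases hb : β j = 0
      · simp [hb, hh]
      · rw [if_pos hb, if_neg hb]
        have h1 := abs_sub_abs_le_abs_sub (β j) (bhat j)
        rw [abs_sub_comm] at h1
        simp only [hh, sub_zero]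
        linarith
    have h2 : A + lam * ∑ j, |bhat j| ≤ lam * ∑ j, |β j| := key
    nlinarith
  have hcone' : SC ≤ ST := by nlinarith
  have hlb := hcone h hne' hcone'
  rw [← hS2, ← hA] at hlb
  have hSTeq : ST = ∑ j ∈ T, |h j| := by rw [hST, hT, Finset.sum_filter]
  have hS2eq : S2 = ∑ j ∈ T, (h j) ^ 2 := by rw [hS2, hT, Finset.sum_filter]
  have hcs : ST ^ 2 ≤ (k : ℝ) * S2 := by
    rw [hSTeq, hS2eq]
    have e : ∑ j ∈ T, |h j| ^ 2 = ∑ j ∈ T, (h j) ^ 2 := by simp [sq_abs]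
    calc (∑ j ∈ T, |h j|) ^ 2 ≤ (T.card : ℝ) * ∑ j ∈ T, |h j| ^ 2 := by
          exact_mod_cast sq_sum_le_card_mul_sum_sq (s := T) (f := fun j => |h j|)
      _ = (T.card : ℝ) * ∑ j ∈ T, (h j) ^ 2 := by rw [e]
      _ ≤ (k : ℝ) * ∑ j ∈ T, (h j) ^ 2 :=
          mul_le_mul_of_nonneg_right (by exact_mod_cast hsupp)
            (Finset.sum_nonneg fun j _ => by positivity)
  by_cases hS2z : S2 = 0
  · -- then ST = 0, SC = 0, so h = 0, contradiction
    have hST0 : ST = 0 := by nlinarith [hcs, hSTnn]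
    have hSC0 : SC = 0 := le_antisymm (hST0 ▸ hcone') hSCnn
    apply hne'
    funext j
    have htot : ∑ j, |h j| = 0 := by
      have : ∀ j : Fin p, |h j| =
          (if β j ≠ 0 then |h j| else 0) + (if β j = 0 then |h j| else 0) := by
        intro j; by_cases hb : β j = 0 <;> simp [hb]
      rw [Finset.sum_congr rfl fun j _ => this j, Finset.sum_add_distrib,
        ← hST, ← hSC, hST0, hSC0, add_zero]
    have := (Finset.sum_eq_zero_iff_of_nonneg (fun j _ => abs_nonneg (h j))).mp htot
      j (Finset.mem_univ j)
    simpa using this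
  · have hS2pos : 0 < S2 := lt_of_le_of_ne hS2nn (Ne.symm hS2z)
    have hsq : 0 < Real.sqrt S2 := Real.sqrt_pos.mpr hS2pos
    have hSTle : ST ≤ Real.sqrt k * Real.sqrt S2 := by
      rw [← Real.sqrt_mul (Nat.cast_nonneg k)]
      exact (Real.le_sqrt hSTnn (by positivity)).mpr hcs
    have h3 : lam * ST ≤ lam * (Real.sqrt k * Real.sqrt S2) :=
      mul_le_mul_of_nonneg_left hSTle hlam0.le
    have h4 : lam * (Real.sqrt k * Real.sqrt S2) < (n : ℝ) * κ * Real.sqrt S2 := by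
      rw [← mul_assoc]
      exact mul_lt_mul_of_pos_right hlamκ hsq
    have h5 : lam * (ST - SC) ≤ lam * ST := by
      rw [mul_sub]
      exact sub_le_self _ (mul_nonneg hlam0.le hSCnn)
    linarith [hlb, hstep, h3, h4, h5]
end
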